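/- arXiv:1001.2086 — 3 statements merged into one kernel-verified Lean document; each statement's English description precedes it below -/
import Mathlib

section
/- The isomorphism type of the shuffle sum Shuf(L) of a countable family of linear orders does not depend on the choice of the dense coloring: if c, c' : ℚ → I are two dense I-colorings, then Σ_{x∈ℚ} L_{c(x)} ≅ Σ_{x∈ℚ} L_{c'(x)}. -/
/-!
A back-and-forth argument, run on finite color-preserving partial isomorphisms, gives an order
automorphism `g` of `ℚ` with `c' ∘ g = c`: extending such a partial isomorphism at a new point
only asks for a point of a given color in a given open interval, which density of the coloring
provides. Reindexing the lexicographic sum along `g` is then an order isomorphism.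
-/

/-- `c : ℚ → I` is a dense `I`-coloring: every color occurs in every nonempty open
interval of `ℚ`. -/
def DenseColoring {I : Type} (c : ℚ → I) : Prop :=
  ∀ x y : ℚ, x < y → ∀ i : I, ∃ z : ℚ, x < z ∧ z < y ∧ c z = i

def IsDenseColoring {α I : Type*} [LT α] (c : α → I) : Prop :=
  ∀ x y : α, x < y → ∀ i : I, ∃ z : α, x < z ∧ z < y ∧ c z = i

theorem DenseColoring.isDenseColoring {I : Type} {c : ℚ → I} (hc : DenseColoring c) :
    IsDenseColoring c :=
  hc

section ColoredBackAndForth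

variable {α β I : Type*} [LinearOrder α] [LinearOrder β]

theorem IsDenseColoring.denselyOrdered [Nonempty I] {c : α → I} (hc : IsDenseColoring c) :
    DenselyOrdered α where
  dense x y hxy :=
    let ⟨z, hxz, hzy, _⟩ := hc x y hxy (Classical.arbitrary I)
    ⟨z, hxz, hzy⟩

theorem IsDenseColoring.exists_between_finsets [NoMinOrder α] [NoMaxOrder α] [Nonempty α]
    {c : α → I} (hc : IsDenseColoring c) (lo hi : Finset α)
    (lo_lt_hi : ∀ x ∈ lo, ∀ y ∈ hi, x < y) (i : I) :
    ∃ m : α, c m = i ∧ (∀ x ∈ lo, x < m) ∧ ∀ y ∈ hi, m < y := by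
  -- Two points `m₁ < m₂` between `lo` and `hi` leave room for a point of color `i`.
  have : Nonempty I := ⟨i⟩
  have := hc.denselyOrdered
  obtain ⟨m₁, lo_lt_m₁, m₁_lt_hi⟩ := Order.exists_between_finsets lo hi lo_lt_hi
  obtain ⟨m₂, lo_lt_m₂, m₂_lt_hi⟩ := Order.exists_between_finsets (insert m₁ lo) hi
    (by simpa using ⟨m₁_lt_hi, lo_lt_hi⟩)
  obtain ⟨m, m₁_lt_m, m_lt_m₂, hm⟩ := hc m₁ m₂ (lo_lt_m₂ m₁ (Finset.mem_insert_self _ _)) i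
  exact ⟨m, hm, fun x hx => (lo_lt_m₁ x hx).trans m₁_lt_m,
    fun y hy => m_lt_m₂.trans (m₂_lt_hi y hy)⟩

/-- `Order.PartialIso`, with the extra requirement that paired points have the same
color. -/
def ColoredPartialIso (c : α → I) (c' : β → I) : Type _ :=
  { f : Finset (α × β) //
    (∀ p ∈ f, ∀ q ∈ f, cmp p.1 q.1 = cmp p.2 q.2) ∧ ∀ p ∈ f, c' p.2 = c p.1 }

namespace ColoredPartialIso

variable {c : α → I} {c' : β → I}

instance : Preorder (ColoredPartialIso c c') :=
  Subtype.preorder _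

instance : Inhabited (ColoredPartialIso c c') :=
  ⟨⟨∅, by simp, by simp⟩⟩

protected def comm (f : ColoredPartialIso c c') : ColoredPartialIso c' c :=
  ⟨f.val.map (Equiv.prodComm α β).toEmbedding, by
    simp only [Finset.mem_map_equiv, Equiv.prodComm_symm, Equiv.prodComm_apply]
    exact ⟨fun p hp q hq => (f.prop.1 _ hp _ hq).symm, fun p hp => (f.prop.2 _ hp).symm⟩⟩

theorem mem_comm {f : ColoredPartialIso c c'} {p : β × α} : p ∈ f.comm.val ↔ p.swap ∈ f.val :=
  Finset.mem_map_equiv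

theorem exists_across [NoMinOrder β] [NoMaxOrder β] [Nonempty β] (hc' : IsDenseColoring c')
    (f : ColoredPartialIso c c') (a : α) :
    ∃ b : β, c' b = c a ∧ ∀ p ∈ f.val, cmp p.1 a = cmp p.2 b := by
  by_cases h : ∃ b, (a, b) ∈ f.val
  · obtain ⟨b, hb⟩ := h
    exact ⟨b, f.prop.2 _ hb, fun p hp => f.prop.1 _ hp _ hb⟩
  have lo_lt_hi : ∀ x ∈ {p ∈ f.val | p.1 < a}.image Prod.snd,
      ∀ y ∈ {p ∈ f.val | a < p.1}.image Prod.snd, x < y := by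
    simp only [Finset.mem_image, Finset.mem_filter]
    rintro _ ⟨p, ⟨hp, hpa⟩, rfl⟩ _ ⟨q, ⟨hq, haq⟩, rfl⟩
    exact (lt_iff_lt_of_cmp_eq_cmp (f.prop.1 _ hp _ hq)).mp (hpa.trans haq)
  obtain ⟨b, hb, lo_lt_b, b_lt_hi⟩ := hc'.exists_between_finsets _ _ lo_lt_hi (c a)
  refine ⟨b, hb, fun p hp => ?_⟩
  have hpa : p.1 ≠ a := fun he => h ⟨p.2, he ▸ hp⟩
  rcases hpa.lt_or_gt with hlt | hgt
  · have hpb : p.2 < b := lo_lt_b _ (Finset.mem_image_of_mem _ (Finset.mem_filter.mpr ⟨hp, hlt⟩))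
    rw [(cmp_eq_lt_iff _ _).mpr hlt, (cmp_eq_lt_iff _ _).mpr hpb]
  · have hbp : b < p.2 := b_lt_hi _ (Finset.mem_image_of_mem _ (Finset.mem_filter.mpr ⟨hp, hgt⟩))
    rw [(cmp_eq_gt_iff _ _).mpr hgt, (cmp_eq_gt_iff _ _).mpr hbp]

def definedAtLeft [NoMinOrder β] [NoMaxOrder β] [Nonempty β] (hc' : IsDenseColoring c')
    (a : α) : Order.Cofinal (ColoredPartialIso c c') where
  carrier := {f | ∃ b, (a, b) ∈ f.val}
  isCofinal f := by
    obtain ⟨b, hb, hab⟩ := exists_across hc' f a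
    refine ⟨⟨insert (a, b) f.val, ?_, ?_⟩, ⟨b, Finset.mem_insert_self _ _⟩,
      Finset.subset_insert _ _⟩
    · simp only [Finset.mem_insert]
      rintro p (rfl | hp) q (rfl | hq)
      · exact (cmp_self_eq_eq _).trans (cmp_self_eq_eq _).symm
      · rw [cmp_eq_cmp_symm]
        exact hab _ hq
      · exact hab _ hp
      · exact f.prop.1 _ hp _ hq
    · simp only [Finset.mem_insert]
      rintro p (rfl | hp)
      · exact hb
      · exact f.prop.2 _ hp

def definedAtRight [NoMinOrder α] [NoMaxOrder α] [Nonempty α] (hc : IsDenseColoring c)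
    (b : β) : Order.Cofinal (ColoredPartialIso c c') where
  carrier := {f | ∃ a, (a, b) ∈ f.val}
  isCofinal f := by
    obtain ⟨f', ⟨a, hba⟩, hf'⟩ := (definedAtLeft hc b).isCofinal f.comm
    exact ⟨f'.comm, ⟨a, mem_comm.mpr hba⟩,
      fun p hp => mem_comm.mpr (hf' (mem_comm.mpr (by rwa [Prod.swap_swap])))⟩

end ColoredPartialIso

open ColoredPartialIso in
theorem IsDenseColoring.exists_orderIso_comp_eq [Countable α] [NoMinOrder α] [NoMaxOrder α]
    [Nonempty α] [Countable β] [NoMinOrder β] [NoMaxOrder β] [Nonempty β]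
    {c : α → I} {c' : β → I} (hc : IsDenseColoring c) (hc' : IsDenseColoring c') :
    ∃ g : α ≃o β, c' ∘ g = c := by
  cases nonempty_encodable (α ⊕ β)
  let cofinals : α ⊕ β → Order.Cofinal (ColoredPartialIso c c') :=
    Sum.elim (definedAtLeft hc') (definedAtRight hc)
  let ideal := Order.idealOfCofinals default cofinals
  have forth (a : α) : ∃ b, ∃ f ∈ ideal, (a, b) ∈ f.val := by
    obtain ⟨f, ⟨b, hab⟩, hf⟩ := Order.cofinal_meets_idealOfCofinals default cofinals (Sum.inl a)
    exact ⟨b, f, hf, hab⟩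
  have back (b : β) : ∃ a, ∃ f ∈ ideal, (a, b) ∈ f.val := by
    obtain ⟨f, ⟨a, hab⟩, hf⟩ := Order.cofinal_meets_idealOfCofinals default cofinals (Sum.inr b)
    exact ⟨a, f, hf, hab⟩
  choose F hF using forth
  choose G hG using back
  refine ⟨OrderIso.ofCmpEqCmp F G fun a b => ?_, funext fun a => ?_⟩
  · obtain ⟨f, hf, haF⟩ := hF a
    obtain ⟨g, hg, hGb⟩ := hG b
    obtain ⟨h, -, hfh, hgh⟩ := ideal.directed _ hf _ hg
    exact h.prop.1 _ (hfh haF) _ (hgh hGb)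
  · obtain ⟨f, -, haF⟩ := hF a
    exact f.prop.2 _ haF

end ColoredBackAndForth

def OrderIso.sigmaLexCongrLeft {ι κ : Type*} [Preorder ι] [Preorder κ] {β : κ → Type*}
    [∀ k, LE (β k)] (g : ι ≃o κ) : (Σₗ i, β (g i)) ≃o Σₗ k, β k where
  toEquiv := ofLex.trans ((Equiv.sigmaCongrLeft g.toEquiv).trans toLex)
  map_rel_iff' := by
    rintro ⟨i, x⟩ ⟨j, y⟩
    change Sigma.Lex _ _ ⟨g i, x⟩ ⟨g j, y⟩ ↔ Sigma.Lex (α := fun i => β (g i)) _ _ ⟨i, x⟩ ⟨j, y⟩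
    constructor
    · rw [Sigma.lex_iff, Sigma.lex_iff]
      rintro (hij | ⟨hij, hxy⟩)
      · exact Or.inl (g.lt_iff_lt.mp hij)
      · obtain rfl := g.injective hij
        exact Or.inr ⟨rfl, hxy⟩
    · rintro (⟨x, y, hij⟩ | ⟨x, y, hxy⟩)
      · exact Sigma.Lex.left _ _ (g.lt_iff_lt.mpr hij)
      · exact Sigma.Lex.right _ _ hxy

theorem shuffle_well_defined_general {I : Type} (L : I → Type)
    [∀ i, LinearOrder (L i)] (c c' : ℚ → I)
    (hc : DenseColoring c) (hc' : DenseColoring c') :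
    Nonempty ((Lex ((x : ℚ) × L (c x))) ≃o (Lex ((x : ℚ) × L (c' x)))) := by
  obtain ⟨g, rfl⟩ := hc.isDenseColoring.exists_orderIso_comp_eq hc'.isDenseColoring
  exact ⟨OrderIso.sigmaLexCongrLeft (β := fun y => L (c' y)) g⟩

/-- The isomorphism type of the shuffle sum of a countable family of linear orders
does not depend on the choice of the dense coloring. -/
theorem shuffle_well_defined {I : Type} [Countable I] (L : I → Type)
    [∀ i, LinearOrder (L i)] (c c' : ℚ → I)
    (hc : DenseColoring c) (hc' : DenseColoring c') :
    Nonempty ((Lex ((x : ℚ) × L (c x))) ≃o (Lex ((x : ℚ) × L (c' x)))) :=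
  shuffle_well_defined_general L c c' hc hc'
end

section
/- If the shuffle sum Shuf(L₁) of a countable class L₁ of linear orders, each of the form ω·i + K with ω·i not embeddable as an interval of K, contains an interval isomorphic to ω·(i+1), then some member of L₁ is of the form ω·(i+1) + K' for some linear order K'. -/
/-- `L` is of the form `ω·i + K` where `ω·i` (here `Lex (Fin i × ℕ)`) is not isomorphic
to any interval of `K`. -/
def OmegaIPlus (i : ℕ) (L : Type) [LinearOrder L] : Prop :=
  ∃ (K : Type) (_ : LinearOrder K),
    Nonempty (L ≃o (Lex (Fin i × ℕ) ⊕ₗ K)) ∧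
    ∀ s : Set K, s.OrdConnected → ¬ Nonempty (↥s ≃o Lex (Fin i × ℕ))

/-!
An interval `s ≅ ω·(i+1)` of the shuffle sum lies in a single summand: if it met the summands over
rationals `q < q'`, it would contain points over every rational in between, and those have no
least element, whereas `s` is well-ordered. So `ω·(i+1)` is an interval `T` of some
`L j ≅ ω·i + K`. `T` meets `K`, since `ω·(i+1)` does not embed in `ω·i` (compare order types),
and it meets `ω·i`, since otherwise the initial `ω·i` of `T` would be an interval of `K`. Hence
`T ∩ K` is an initial segment of `K` and a final segment of `ω·(i+1)`; the first `ω`-block `W` of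
that final segment is an initial segment of `K` of type `ω`, and
`L j ≅ ω·i + ω + (K ∖ W) ≅ ω·(i+1) + (K ∖ W)`.
-/

open Set Sum

local notation "ω·" m:max => Lex (Fin m × ℕ)

theorem Sum.Lex.exists_eq_inl_of_le_inl {α β : Type*} [LE α] [LE β] {a : α} {w : α ⊕ₗ β}
    (h : w ≤ toLex (inl a)) : ∃ a', w = toLex (inl a') := by
  rcases w with a' | b
  · exact ⟨a', rfl⟩
  · exact absurd h Sum.Lex.not_inr_le_inl

theorem Sum.Lex.exists_eq_inr_of_inr_le {α β : Type*} [LE α] [LE β] {b : β} {w : α ⊕ₗ β}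
    (h : toLex (inr b) ≤ w) : ∃ b', w = toLex (inr b') := by
  rcases w with a | b'
  · exact absurd h Sum.Lex.not_inr_le_inl
  · exact ⟨b', rfl⟩

def Sum.Lex.inlOrderEmbedding (α β : Type*) [LE α] [LE β] : α ↪o α ⊕ₗ β :=
  ⟨⟨toLex ∘ inl, toLex.injective.comp inl_injective⟩, Sum.Lex.inl_le_inl_iff⟩

def Sum.Lex.inrOrderEmbedding (α β : Type*) [LE α] [LE β] : β ↪o α ⊕ₗ β :=
  ⟨⟨toLex ∘ inr, toLex.injective.comp inr_injective⟩, Sum.Lex.inr_le_inr_iff⟩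

def EmbedsAsInterval (β α : Type*) [Preorder β] [Preorder α] : Prop :=
  ∃ f : β ↪o α, (range f).OrdConnected

section EmbedsAsInterval

variable {α β γ : Type*} [Preorder α] [Preorder β] [Preorder γ]

theorem embedsAsInterval_iff :
    EmbedsAsInterval β α ↔ ∃ s : Set α, s.OrdConnected ∧ Nonempty (s ≃o β) := by
  constructor
  · rintro ⟨f, hf⟩
    exact ⟨range f, hf, ⟨OrderEmbedding.orderIso.symm⟩⟩
  · rintro ⟨s, hs, ⟨e⟩⟩
    refine ⟨e.symm.toOrderEmbedding.trans (OrderEmbedding.subtype (· ∈ s)), ?_⟩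
    simpa [range_comp, OrderEmbedding.coe_subtype] using hs

theorem EmbedsAsInterval.of_orderIso (e : β ≃o α) : EmbedsAsInterval β α :=
  ⟨e.toOrderEmbedding, by simpa using ordConnected_univ⟩

theorem EmbedsAsInterval.trans (h₁ : EmbedsAsInterval α β) (h₂ : EmbedsAsInterval β γ) :
    EmbedsAsInterval α γ := by
  obtain ⟨f₁, hf₁⟩ := h₁
  obtain ⟨f₂, hf₂⟩ := h₂
  refine ⟨f₁.trans f₂, ⟨?_⟩⟩
  rintro _ ⟨a, rfl⟩ _ ⟨b, rfl⟩ w hw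
  obtain ⟨v, rfl⟩ := hf₂.out (mem_range_self (f₁ a)) (mem_range_self (f₁ b)) hw
  obtain ⟨u, rfl⟩ := hf₁.out (mem_range_self a) (mem_range_self b)
    ⟨f₂.le_iff_le.1 hw.1, f₂.le_iff_le.1 hw.2⟩
  exact mem_range_self u

theorem embedsAsInterval_of_range_subset {β : Type*} [PartialOrder β] (e : α ↪o γ) (f : β ↪o γ)
    (hf : (range f).OrdConnected) (hfe : range f ⊆ range e) : EmbedsAsInterval β α := by
  choose g hg using fun b => hfe (mem_range_self b)
  refine ⟨OrderEmbedding.ofMapLEIff g fun a b => by rw [← e.le_iff_le, hg, hg, f.le_iff_le], ?_⟩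
  have : range g = e ⁻¹' range f := by
    ext x
    constructor
    · rintro ⟨b, rfl⟩
      exact ⟨b, (hg b).symm⟩
    · rintro ⟨b, hb⟩
      exact ⟨b, e.injective ((hg b).trans hb)⟩
  simpa [this] using hf.preimage_mono e.monotone

theorem embedsAsInterval_sumLex_left : EmbedsAsInterval α (α ⊕ₗ β) := by
  refine ⟨Sum.Lex.inlOrderEmbedding α β, ?_⟩
  refine IsLowerSet.ordConnected fun _ v hv ⟨a, ha⟩ => ?_
  obtain ⟨a', rfl⟩ := Sum.Lex.exists_eq_inl_of_le_inl (ha ▸ hv)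
  exact mem_range_self a'

end EmbedsAsInterval

noncomputable def IsLowerSet.sumLexComplOrderIso {α : Type*} [LinearOrder α] {W : Set α}
    (hW : IsLowerSet W) : W ⊕ₗ ↥Wᶜ ≃o α := by
  refine StrictMono.orderIsoOfSurjective (fun x => Sum.elim Subtype.val Subtype.val (ofLex x))
    ?_ fun a => ?_
  · rintro (a | a) (b | b) h
    · exact (Sum.Lex.inl_lt_inl_iff.1 h :)
    · exact lt_of_not_ge fun hba => b.2 (hW hba a.2)
    · exact absurd h Sum.Lex.not_inr_lt_inl
    · exact (Sum.Lex.inr_lt_inr_iff.1 h :)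
  · by_cases ha : a ∈ W
    · exact ⟨toLex (inl ⟨a, ha⟩), rfl⟩
    · exact ⟨toLex (inr ⟨a, ha⟩), rfl⟩

theorem Prod.Lex.exists_eq_add_of_le_of_le {α : Type*} [Preorder α] {a : α} {n t : ℕ}
    {q : α ×ₗ ℕ} (h₁ : toLex (a, n) ≤ q) (h₂ : q ≤ toLex (a, n + t)) :
    ∃ s, q = toLex (a, n + s) := by
  obtain ⟨⟨b, k⟩, rfl⟩ := toLex.surjective q
  rw [Prod.Lex.toLex_le_toLex] at h₁ h₂
  rcases h₁ with hab | ⟨rfl, hnk⟩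
  · rcases h₂ with hba | ⟨rfl, -⟩
    · exact absurd (hab.trans hba) (lt_irrefl a)
    · exact absurd hab (lt_irrefl b)
  · exact ⟨k - n, by rw [Nat.add_sub_cancel' hnk]⟩

def Sigma.Lex.mkOrderEmbedding {ι : Type*} [Preorder ι] {γ : ι → Type*} [∀ i, Preorder (γ i)]
    (i : ι) : γ i ↪o Σₗ i, γ i :=
  ⟨⟨fun a => toLex ⟨i, a⟩, fun a b h => by simpa using h⟩, fun {a b} => by
    change toLex (⟨i, a⟩ : Sigma γ) ≤ toLex ⟨i, b⟩ ↔ a ≤ b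
    rw [Sigma.Lex.le_def]
    exact ⟨fun h => h.elim (absurd · (lt_irrefl i)) fun ⟨_, h⟩ => h, fun h => .inr ⟨rfl, h⟩⟩⟩

section SigmaLex

variable {ι : Type*} [LinearOrder ι] [DenselyOrdered ι] {γ : ι → Type*} [∀ i, Preorder (γ i)]
  [∀ i, Nonempty (γ i)]

theorem Sigma.Lex.fst_eq_of_ordConnected_range {β : Type*} [Preorder β] [WellFoundedLT β]
    (f : β ↪o Σₗ i, γ i) (hf : (range f).OrdConnected) (a b : β) : (f a).1 = (f b).1 := by
  by_contra hne
  wlog hab : (f a).1 < (f b).1 generalizing a b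
  · exact this b a (Ne.symm hne) ((Ne.lt_or_gt hne).resolve_left hab)
  have hfst : ∀ z, (f a).1 < z → z < (f b).1 → ∃ x, (f x).1 = z := by
    intro z h₁ h₂
    have hz : (toLex ⟨z, Classical.arbitrary _⟩ : Σₗ i, γ i) ∈ range f :=
      hf.out (mem_range_self a) (mem_range_self b)
        ⟨(Sigma.Lex.lt_def.2 (.inl h₁)).le, (Sigma.Lex.lt_def.2 (.inl h₂)).le⟩
    obtain ⟨x, hx⟩ := hz
    exact ⟨x, by rw [hx]; rfl⟩
  obtain ⟨z, hz₁, hz₂⟩ := exists_between hab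
  obtain ⟨x₀, rfl⟩ := hfst z hz₁ hz₂
  obtain ⟨m, ⟨hm₁, hm₂⟩, hmin⟩ :=
    wellFounded_lt.has_min {x | (f a).1 < (f x).1 ∧ (f x).1 < (f b).1} ⟨x₀, hz₁, hz₂⟩
  obtain ⟨z', hz'₁, hz'₂⟩ := exists_between hm₁
  obtain ⟨x, rfl⟩ := hfst z' hz'₁ (hz'₂.trans hm₂)
  exact hmin x ⟨hz'₁, hz'₂.trans hm₂⟩ (f.lt_iff_lt.1 (Sigma.Lex.lt_def.2 (.inl hz'₂)))

theorem EmbedsAsInterval.exists_sigmaLex_fiber {β : Type*} [PartialOrder β] [WellFoundedLT β]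
    [Nonempty β] (h : EmbedsAsInterval β (Σₗ i, γ i)) : ∃ i, EmbedsAsInterval β (γ i) := by
  obtain ⟨f, hf⟩ := h
  obtain ⟨b₀⟩ := ‹Nonempty β›
  refine ⟨(f b₀).1, embedsAsInterval_of_range_subset (Sigma.Lex.mkOrderEmbedding _) f hf ?_⟩
  rintro _ ⟨b, rfl⟩
  have hb := Sigma.Lex.fst_eq_of_ordConnected_range f hf b b₀
  generalize f b = w at hb
  obtain ⟨i, y⟩ := w
  subst hb
  exact ⟨y, rfl⟩

end SigmaLex

theorem typeLT_omegaMul (m : ℕ) :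
    Ordinal.type ((· < ·) : ω·m → ω·m → Prop) = Ordinal.omega0 * m := by
  rw [← Ordinal.type_fin, ← Ordinal.type_nat_lt, ← Ordinal.type_prod_lex]
  rfl

theorem isEmpty_orderEmbedding_omegaMul_succ (m : ℕ) : IsEmpty (ω·(m+1) ↪o ω·m) := by
  refine ⟨fun f => ?_⟩
  have := f.ltEmbedding.ordinal_type_le
  rw [typeLT_omegaMul, typeLT_omegaMul] at this
  simp at this

theorem nonempty_omegaMul_sumLex_nat_orderIso (m : ℕ) : Nonempty (ω·m ⊕ₗ ℕ ≃o ω·(m+1)) := by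
  have : Ordinal.type (Sum.Lex ((· < ·) : ω·m → ω·m → Prop) ((· < ·) : ℕ → ℕ → Prop)) =
      Ordinal.type ((· < ·) : ω·(m+1) → ω·(m+1) → Prop) := by
    rw [Ordinal.type_sum_lex, typeLT_omegaMul, typeLT_omegaMul, Ordinal.type_nat_lt]
    push_cast
    rw [mul_add_one]
  obtain ⟨e⟩ := Ordinal.type_eq.1 this
  exact ⟨OrderIso.ofRelIsoLT (α := ω·m ⊕ₗ ℕ) e⟩

theorem exists_isLowerSet_orderIso_nat {m : ℕ} {α K : Type*} [LinearOrder α] [LinearOrder K]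
    (F : ω·m ↪o α ⊕ₗ K) (hF : (range F).OrdConnected) {p₀ p₁ : ω·m} {x : α} {z : K}
    (hp₀ : F p₀ = toLex (inl x)) (hp₁ : F p₁ = toLex (inr z)) :
    ∃ W : Set K, IsLowerSet W ∧ Nonempty (W ≃o ℕ) := by
  obtain ⟨p, ⟨z, hz⟩, hpmin⟩ :=
    wellFounded_lt.has_min {p | ∃ z, F p = toLex (inr z)} ⟨p₁, z, hp₁⟩
  have hblock : ∀ t, ∃ y, F (toLex ((ofLex p).1, (ofLex p).2 + t)) = toLex (inr y) := fun t =>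
    Sum.Lex.exists_eq_inr_of_inr_le (b := z) (hz ▸ F.monotone
      (Prod.Lex.toLex_le_toLex.2 (.inr ⟨rfl, Nat.le_add_right _ _⟩)))
  -- `p` is the least point sent into `K`; `u` lists the images of the `ω`-block starting at `p`.
  choose u hu using hblock
  have hu_mono : StrictMono u := fun s t hst => by
    rw [← Sum.Lex.inr_lt_inr_iff (α := α), ← hu, ← hu]
    exact F.strictMono (Prod.Lex.toLex_lt_toLex.2 (.inr ⟨rfl, by omega⟩))
  refine ⟨range u, ?_, ⟨(hu_mono.orderIso u).symm⟩⟩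
  rintro _ y hy ⟨t, rfl⟩
  obtain ⟨q, hq⟩ := hF.out (mem_range_self p₀) (mem_range_self _)
    ⟨hp₀ ▸ Sum.Lex.inl_le_inr x y, (hu t).symm ▸ Sum.Lex.inr_le_inr_iff.2 hy⟩
  have hpq : p ≤ q := not_lt.1 (hpmin q ⟨y, hq⟩)
  have hqt : q ≤ toLex ((ofLex p).1, (ofLex p).2 + t) :=
    F.le_iff_le.1 (by rw [hq, hu]; exact Sum.Lex.inr_le_inr_iff.2 hy)
  obtain ⟨s, rfl⟩ := Prod.Lex.exists_eq_add_of_le_of_le hpq hqt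
  exact ⟨s, inr_injective (toLex.injective ((hu s).symm.trans hq))⟩

theorem exists_orderIso_omegaMul_succ_sumLex {m : ℕ} {K : Type} [LinearOrder K]
    (hK : ¬ EmbedsAsInterval (ω·m) K) (h : EmbedsAsInterval (ω·(m+1)) (ω·m ⊕ₗ K)) :
    ∃ (K' : Type) (_ : LinearOrder K'), Nonempty (ω·m ⊕ₗ K ≃o ω·(m+1) ⊕ₗ K') := by
  obtain ⟨F, hF⟩ := h
  obtain ⟨e⟩ := nonempty_omegaMul_sumLex_nat_orderIso m
  obtain ⟨p₁, z, hp₁⟩ : ∃ p z, F p = toLex (inr z) := by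
    by_contra! hleft
    have hsub : range F ⊆ range (Sum.Lex.inlOrderEmbedding _ K) := by
      rintro _ ⟨p, rfl⟩
      rcases hFp : F p with x | z
      · exact ⟨x, rfl⟩
      · exact absurd hFp (hleft p z)
    obtain ⟨f, -⟩ := embedsAsInterval_of_range_subset _ F hF hsub
    exact (isEmpty_orderEmbedding_omegaMul_succ m).false f
  obtain ⟨p₀, x, hp₀⟩ : ∃ p x, F p = toLex (inl x) := by
    by_contra! hright
    have hsub : range F ⊆ range (Sum.Lex.inrOrderEmbedding (ω·m) K) := by
      rintro _ ⟨p, rfl⟩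
      rcases hFp : F p with x | z
      · exact absurd hFp (hright p x)
      · exact ⟨z, rfl⟩
    exact hK ((embedsAsInterval_sumLex_left.trans (.of_orderIso e)).trans
      (embedsAsInterval_of_range_subset _ F hF hsub))
  obtain ⟨W, hW, ⟨eW⟩⟩ := exists_isLowerSet_orderIso_nat F hF hp₀ hp₁
  have eK : K ≃o ℕ ⊕ₗ ↥Wᶜ := hW.sumLexComplOrderIso.symm.trans (eW.sumLexCongr (.refl _))
  exact ⟨↥Wᶜ, inferInstance, ⟨((OrderIso.refl _).sumLexCongr eK).trans <|
    (OrderIso.sumLexAssoc _ _ _).symm.trans (e.sumLexCongr (.refl _))⟩⟩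

theorem OmegaIPlus.nonempty {i : ℕ} {L : Type} [LinearOrder L] (hi : 0 < i)
    (h : OmegaIPlus i L) : Nonempty L := by
  obtain ⟨K, _, ⟨e⟩, -⟩ := h
  exact ⟨e.symm (toLex (inl (toLex (⟨0, hi⟩, 0))))⟩

theorem shuffle_interval_omega_succ_general {i : ℕ} (hi : 1 ≤ i) {ι : Type}
    (L : ι → Type) [∀ j, LinearOrder (L j)]
    (h : ∀ j, OmegaIPlus i (L j))
    (c : ℚ → ι)
    (s : Set (Lex ((x : ℚ) × L (c x)))) (hs : s.OrdConnected)
    (hiso : Nonempty (↥s ≃o Lex (Fin (i + 1) × ℕ))) :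
    ∃ (j : ι) (K' : Type) (_ : LinearOrder K'),
      Nonempty (L j ≃o (Lex (Fin (i + 1) × ℕ) ⊕ₗ K')) := by
  have hL : ∀ x, Nonempty (L (c x)) := fun x => (h (c x)).nonempty hi
  obtain ⟨q, hq⟩ := (embedsAsInterval_iff.2 ⟨s, hs, hiso⟩).exists_sigmaLex_fiber
  obtain ⟨K, _, ⟨e⟩, hK⟩ := h (c q)
  obtain ⟨K', _, ⟨e'⟩⟩ := exists_orderIso_omegaMul_succ_sumLex
    (by simpa [embedsAsInterval_iff] using hK) (hq.trans (.of_orderIso e))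
  exact ⟨c q, K', _, ⟨e.trans e'⟩⟩

/-- If the shuffle sum of a countable class `L₁` of linear orders, each of the form
`ω·i + K` with `ω·i` not embeddable as an interval of `K`, contains an interval
isomorphic to `ω·(i+1)`, then some member of `L₁` is of the form `ω·(i+1) + K'`. -/
theorem shuffle_interval_omega_succ {i : ℕ} (hi : 1 ≤ i) {ι : Type} [Countable ι]
    (L : ι → Type) [∀ j, LinearOrder (L j)]
    (h : ∀ j, OmegaIPlus i (L j))
    (c : ℚ → ι) (hc : DenseColoring c)
    (s : Set (Lex ((x : ℚ) × L (c x)))) (hs : s.OrdConnected)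
    (hiso : Nonempty (↥s ≃o Lex (Fin (i + 1) × ℕ))) :
    ∃ (j : ι) (K' : Type) (_ : LinearOrder K'),
      Nonempty (L j ≃o (Lex (Fin (i + 1) × ℕ) ⊕ₗ K')) :=
  shuffle_interval_omega_succ_general hi L h c s hs hiso
end

section
/- The lexicographic order on the language σ(D) = ({0,1}*1D)⁺ is a countable dense linear order without endpoints, hence isomorphic to (ℚ, ≤); moreover the coloring c : σ(D) → D sending x·1·u (with u ∈ D the final D-factor) to u is a dense D-coloring of (σ(D), ≤_lex). -/
open Computability

/-- Words over `{0,1}` (here `{z, o}`). -/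
def Bwords {α : Type} (z o : α) : Language α := {w | ∀ a ∈ w, a = z ∨ a = o}

/-- The language `{0,1}*1D`. -/
def blockL {α : Type} (z o : α) (D : Language α) : Language α :=
  Bwords z o * ({[o]} : Language α) * D

/-- The language `σ(D) = ({0,1}*1D)⁺`. -/
def sigmaL {α : Type} (z o : α) (D : Language α) : Language α :=
  blockL z o D * (blockL z o D)∗

/-- The language `({0,1}*1D)* {0,1}*` of possible prefixes preceding the final `1·u`
factor. -/
def prefixL {α : Type} (z o : α) (D : Language α) : Language α :=
  (blockL z o D)∗ * Bwords z o


/-! Every word of `σ(D)` has the shape `x ++ o :: u` with `x ∈ prefixL` and `u ∈ D`; its letters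
are `≥ z` and it never ends in `z`. Given `w₁ < w₂` in `σ(D)`: if `w₁` is not a prefix of `w₂`,
every extension `w₁ ++ o :: u` stays below `w₂`; if `w₂ = w₁ ++ t`, then `t` contains a letter
`> z`, so padding `w₁` with `|t|` copies of `z` before `o :: u` lands strictly between. The same
padding below `w₂` with `w₁ = []` shows there is no least word, and Cantor's back-and-forth
theorem identifies the resulting countable dense order without endpoints with `ℚ`. -/

namespace List

variable {α : Type} [LinearOrder α]

theorem replicate_length_append_lt {z : α} {t : List α} (hz : ∀ a ∈ t, z ≤ a)
    (hne : ∃ a ∈ t, a ≠ z) (s : List α) : replicate t.length z ++ s < t := by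
  induction t with
  | nil => simp at hne
  | cons a t ih =>
    rw [length_cons, replicate_succ, cons_append, cons_lt_cons_iff]
    rcases eq_or_ne a z with rfl | haz
    · refine Or.inr ⟨rfl, ih (fun b hb => hz b (mem_cons_of_mem _ hb)) ?_⟩
      simpa using hne
    · exact Or.inl ((hz a mem_cons_self).lt_of_ne haz.symm)

theorem append_lt_of_lt_of_not_prefix {l₁ l₂ : List α} (h : l₁ < l₂) (hp : ¬l₁ <+: l₂)
    (s : List α) : l₁ ++ s < l₂ := by
  induction h with
  | nil => exact absurd nil_prefix hp
  | rel hab => exact Lex.rel hab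
  | cons _ ih => exact Lex.cons (ih fun h => hp (prefix_cons_inj _ |>.mpr h))

theorem nil_lt_of_ne_nil {l : List α} (h : l ≠ []) : [] < l := by
  obtain ⟨a, l, rfl⟩ := exists_cons_of_ne_nil h
  exact nil_lt_cons a l

theorem lt_append_of_ne_nil (l : List α) {t : List α} (ht : t ≠ []) : l < l ++ t := by
  obtain ⟨a, t, rfl⟩ := exists_cons_of_ne_nil ht
  simpa using append_left_lt (l₁ := l) (nil_lt_cons a t)

end List

open List Computability

section Languages

variable {α : Type} {z o : α} {D : Language α}

theorem sigmaL_eq_prefixL_mul : sigmaL z o D = prefixL z o D * {[o]} * D := by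
  rw [sigmaL, ← Language.mul_self_kstar_comm, prefixL, blockL]
  simp only [mul_assoc]

theorem mem_sigmaL_iff {w : List α} :
    w ∈ sigmaL z o D ↔ ∃ x ∈ prefixL z o D, ∃ u ∈ D, w = x ++ o :: u := by
  have mem_o : ∀ x, x ∈ ({[o]} : Language α) ↔ x = [o] := fun _ => Iff.rfl
  simp [sigmaL_eq_prefixL_mul, Language.mem_mul, mem_o, eq_comm]

theorem ne_nil_of_mem_sigmaL {w : List α} (hw : w ∈ sigmaL z o D) : w ≠ [] := by
  obtain ⟨x, -, u, -, rfl⟩ := mem_sigmaL_iff.mp hw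
  simp

theorem sigmaL_le_kstar : sigmaL z o D ≤ (blockL z o D)∗ :=
  mul_kstar_le_kstar

theorem append_replicate_mem_prefixL {w : List α} (hw : w ∈ (blockL z o D)∗) (n : ℕ) :
    w ++ replicate n z ∈ prefixL z o D :=
  Language.append_mem_mul hw fun _ ha => Or.inl (eq_of_mem_replicate ha)

theorem mem_prefixL_of_mem_kstar {w : List α} (hw : w ∈ (blockL z o D)∗) :
    w ∈ prefixL z o D := by
  simpa using append_replicate_mem_prefixL hw 0

theorem append_mem_sigmaL {x u : List α} (hx : x ∈ prefixL z o D) (hu : u ∈ D) :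
    x ++ o :: u ∈ sigmaL z o D :=
  mem_sigmaL_iff.mpr ⟨x, hx, u, hu, rfl⟩

end Languages

section Order

variable {α : Type} [LinearOrder α] {z o : α} {D : Language α}

theorem le_of_mem_blockL (hzo : z < o) (hD : ∀ u ∈ D, ∀ a ∈ u, z < a) {b : List α}
    (hb : b ∈ blockL z o D) {a : α} (ha : a ∈ b) : z ≤ a := by
  obtain ⟨_, ⟨x, hx, _, rfl, rfl⟩, u, hu, rfl⟩ := hb
  simp only [mem_append, mem_singleton] at ha
  rcases ha with (ha | rfl) | ha
  · rcases hx a ha with rfl | rfl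
    exacts [le_rfl, hzo.le]
  · exact hzo.le
  · exact (hD u hu a ha).le

theorem le_of_mem_sigmaL (hzo : z < o) (hD : ∀ u ∈ D, ∀ a ∈ u, z < a) {w : List α}
    (hw : w ∈ sigmaL z o D) {a : α} (ha : a ∈ w) : z ≤ a := by
  obtain ⟨L, rfl, hL⟩ := Language.mem_kstar.mp (sigmaL_le_kstar hw)
  obtain ⟨b, hb, hab⟩ := mem_flatten.mp ha
  exact le_of_mem_blockL hzo hD (hL b hb) hab

theorem exists_ne_of_append_mem_sigmaL (hzo : z < o) (hD : ∀ u ∈ D, ∀ a ∈ u, z < a)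
    {w t : List α} (h : w ++ t ∈ sigmaL z o D) (ht : t ≠ []) : ∃ a ∈ t, a ≠ z := by
  obtain ⟨x, -, u, hu, hxu⟩ := mem_sigmaL_iff.mp h
  rcases append_eq_append_iff.mp hxu with ⟨c, -, rfl⟩ | ⟨c, -, hc⟩
  · exact ⟨o, by simp, hzo.ne'⟩
  · obtain ⟨a, t, rfl⟩ := exists_cons_of_ne_nil ht
    refine ⟨a, mem_cons_self, ?_⟩
    rcases mem_cons.mp (hc ▸ mem_append_right c mem_cons_self : a ∈ o :: u) with rfl | ha
    exacts [hzo.ne', (hD u hu a ha).ne']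

theorem exists_final_factor_between (hzo : z < o) (hD : ∀ u ∈ D, ∀ a ∈ u, z < a)
    {w₁ w₂ : List α} (hw₁ : w₁ ∈ (blockL z o D)∗) (hw₂ : w₂ ∈ sigmaL z o D) (hlt : w₁ < w₂)
    (u : List α) : ∃ x ∈ prefixL z o D, w₁ < x ++ o :: u ∧ x ++ o :: u < w₂ := by
  by_cases hp : w₁ <+: w₂
  · obtain ⟨t, rfl⟩ := hp
    have ht : t ≠ [] := by rintro rfl; simp at hlt
    refine ⟨w₁ ++ replicate t.length z, append_replicate_mem_prefixL hw₁ _, ?_, ?_⟩ <;>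
      rw [append_assoc]
    · exact lt_append_of_ne_nil _ (by simp)
    · refine append_left_lt (replicate_length_append_lt (fun a ha => ?_)
        (exists_ne_of_append_mem_sigmaL hzo hD hw₂ ht) _)
      exact le_of_mem_sigmaL hzo hD hw₂ (mem_append_right _ ha)
  · exact ⟨w₁, mem_prefixL_of_mem_kstar hw₁, lt_append_of_ne_nil _ (cons_ne_nil _ _),
      append_lt_of_lt_of_not_prefix hlt hp _⟩

end Order

/-- The lexicographic order on `σ(D) = ({0,1}*1D)⁺` is a countable dense linear order
without endpoints, hence isomorphic to `(ℚ, ≤)`; moreover the coloring sending `x·1·u`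
(with `u ∈ D` the final `D`-factor) to `u` is a dense `D`-coloring: every `u ∈ D` occurs
as a final factor of some word strictly between any two given words of `σ(D)`. -/
theorem sigmaL_dense_coloring {α : Type} [LinearOrder α] [Countable α]
    (z o : α) (G : Set α) (D : Language α)
    (hzo : z < o) (hG : ∀ g ∈ G, z < g ∧ g ≠ o)
    (hD : D.Nonempty) (hDG : ∀ w ∈ D, ∀ a ∈ w, a ∈ G) :
    Nonempty ({w : List α // w ∈ sigmaL z o D} ≃o ℚ) ∧
    ∀ w₁ ∈ sigmaL z o D, ∀ w₂ ∈ sigmaL z o D, w₁ < w₂ → ∀ u ∈ D,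
      ∃ x ∈ prefixL z o D,
        w₁ < x ++ o :: u ∧ x ++ o :: u < w₂ ∧ x ++ o :: u ∈ sigmaL z o D := by
  have hDz : ∀ u ∈ D, ∀ a ∈ u, z < a := fun u hu a ha => (hG a (hDG u hu a ha)).1
  have between {w₁ w₂} (hw₁ : w₁ ∈ (blockL z o D)∗) (hw₂ : w₂ ∈ sigmaL z o D)
      (hlt : w₁ < w₂) {u} (hu : u ∈ D) :
      ∃ x ∈ prefixL z o D, w₁ < x ++ o :: u ∧ x ++ o :: u < w₂ ∧ x ++ o :: u ∈ sigmaL z o D :=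
    let ⟨x, hx, h₁, h₂⟩ := exists_final_factor_between hzo hDz hw₁ hw₂ hlt u
    ⟨x, hx, h₁, h₂, append_mem_sigmaL hx hu⟩
  refine ⟨?_, fun w₁ hw₁ w₂ hw₂ hlt u hu => between (sigmaL_le_kstar hw₁) hw₂ hlt hu⟩
  obtain ⟨u₀, hu₀⟩ := hD
  let S := {w : List α // w ∈ sigmaL z o D}
  have : Nonempty S :=
    ⟨⟨[] ++ o :: u₀, append_mem_sigmaL (mem_prefixL_of_mem_kstar (Language.nil_mem_kstar _)) hu₀⟩⟩
  have : DenselyOrdered S := ⟨fun ⟨_, hw₁⟩ ⟨_, hw₂⟩ hlt =>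
    let ⟨_, _, h₁, h₂, hx⟩ := between (sigmaL_le_kstar hw₁) hw₂ hlt hu₀
    ⟨⟨_, hx⟩, h₁, h₂⟩⟩
  have : NoMinOrder S := ⟨fun ⟨_, hw⟩ =>
    let ⟨_, _, _, h, hx⟩ := between (Language.nil_mem_kstar _) hw
      (nil_lt_of_ne_nil (ne_nil_of_mem_sigmaL hw)) hu₀
    ⟨⟨_, hx⟩, h⟩⟩
  have : NoMaxOrder S := ⟨fun ⟨w, hw⟩ =>
    ⟨⟨w ++ o :: u₀, append_mem_sigmaL (mem_prefixL_of_mem_kstar (sigmaL_le_kstar hw)) hu₀⟩,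
      lt_append_of_ne_nil w (cons_ne_nil _ _)⟩⟩
  exact Order.iso_of_countable_dense S ℚ
end
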